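/- arXiv:1910.03436 — 4 statements merged into one kernel-verified Lean document; each statement's English description precedes it below -/
import Mathlib

section
/- Let a1, a2, b1, b2 > 0 with b1*b2 < a1*a2 and 4*a1*a2 < (b1 + b2)². Define r = (b1+b2)*(3*a1*a2 + b1*b2) / (2*a2*(a1*a2 + b1*b2 + 2*b2²)). Then b1/a2 < r < a1/b2. -/
/-!
Put `p = a1 * a2`, `s = b1 * b2` and write `r = N / D`. Clearing denominators, both bounds are
polynomial identities times the positive factor `p - s`:
`a2 * N - b1 * D = a2 * (p - s) * (b1 + 3 * b2)` and `a1 * D - b2 * N = (p - s) * (2 * p + s + b2 ^ 2)`.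
-/

noncomputable def rRatio (a1 a2 b1 b2 : ℝ) : ℝ :=
  (b1 + b2) * (3 * (a1 * a2) + b1 * b2) / (2 * a2 * (a1 * a2 + b1 * b2 + 2 * b2 ^ 2))

section

variable {a1 a2 b1 b2 : ℝ}

lemma rRatio_denom_pos (ha2 : 0 < a2) (hb1 : 0 < b1) (hb2 : 0 < b2) (h1 : b1 * b2 < a1 * a2) :
    0 < 2 * a2 * (a1 * a2 + b1 * b2 + 2 * b2 ^ 2) := by
  have hs : 0 < b1 * b2 := mul_pos hb1 hb2
  have hp : 0 < a1 * a2 := hs.trans h1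
  positivity

lemma div_lt_rRatio (ha2 : 0 < a2) (hb1 : 0 < b1) (hb2 : 0 < b2) (h1 : b1 * b2 < a1 * a2) :
    b1 / a2 < rRatio a1 a2 b1 b2 := by
  rw [rRatio, div_lt_div_iff₀ ha2 (rRatio_denom_pos ha2 hb1 hb2 h1)]
  have hgap : 0 < a2 * ((a1 * a2 - b1 * b2) * (b1 + 3 * b2)) :=
    mul_pos ha2 (mul_pos (sub_pos.mpr h1) (by positivity))
  linear_combination hgap

lemma rRatio_lt_div (ha2 : 0 < a2) (hb1 : 0 < b1) (hb2 : 0 < b2) (h1 : b1 * b2 < a1 * a2) :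
    rRatio a1 a2 b1 b2 < a1 / b2 := by
  rw [rRatio, div_lt_div_iff₀ (rRatio_denom_pos ha2 hb1 hb2 h1) hb2]
  have hs : 0 < b1 * b2 := mul_pos hb1 hb2
  have hp : 0 < a1 * a2 := hs.trans h1
  have hgap : 0 < (a1 * a2 - b1 * b2) * (2 * (a1 * a2) + b1 * b2 + b2 ^ 2) :=
    mul_pos (sub_pos.mpr h1) (by positivity)
  linear_combination hgap

end

theorem r_ratio_in_weak_range_general
    (a1 a2 b1 b2 : ℝ)
    (ha2 : 0 < a2) (hb1 : 0 < b1) (hb2 : 0 < b2)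
    (h1 : b1 * b2 < a1 * a2) :
    b1 / a2 < (b1 + b2) * (3 * (a1 * a2) + b1 * b2)
        / (2 * a2 * (a1 * a2 + b1 * b2 + 2 * b2 ^ 2)) ∧
    (b1 + b2) * (3 * (a1 * a2) + b1 * b2)
        / (2 * a2 * (a1 * a2 + b1 * b2 + 2 * b2 ^ 2)) < a1 / b2 :=
  ⟨div_lt_rRatio ha2 hb1 hb2 h1, rRatio_lt_div ha2 hb1 hb2 h1⟩

theorem r_ratio_in_weak_range
    (a1 a2 b1 b2 : ℝ)
    (ha1 : 0 < a1) (ha2 : 0 < a2) (hb1 : 0 < b1) (hb2 : 0 < b2)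
    (h1 : b1 * b2 < a1 * a2) (h2 : 4 * (a1 * a2) < (b1 + b2) ^ 2) :
    b1 / a2 < (b1 + b2) * (3 * (a1 * a2) + b1 * b2)
        / (2 * a2 * (a1 * a2 + b1 * b2 + 2 * b2 ^ 2)) ∧
    (b1 + b2) * (3 * (a1 * a2) + b1 * b2)
        / (2 * a2 * (a1 * a2 + b1 * b2 + 2 * b2 ^ 2)) < a1 / b2 :=
  r_ratio_in_weak_range_general a1 a2 b1 b2 ha2 hb1 hb2 h1
end

section
/- Let a1, a2, b1, b2 > 0 satisfy b1*b2 < a1*a2 and 4*a1*a2 < (b1+b2)². Let r1, r2 > 0 with r1/r2 = (b1+b2)*(3*a1*a2 + b1*b2)/(2*a2*(a1*a2 + b1*b2 + 2*b2²)). Define u* = (r1*a2 - r2*b1)/(a1*a2 - b1*b2), v* = (r2*a1 - r1*b2)/(a1*a2 - b1*b2), α = (b2*u* - a2*v*)*v*, β = (b1*v* - a1*u*)*u*. Then α + β > 0. -/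
/-!
Both `α` and `β` are quadratic in `(u*, v*)`, and `α + β = Q(u*, v*)` for the indefinite form
`Q(u, v) = (b1 + b2) u v - a1 u² - a2 v²` of discriminant `(b1 + b2)² - 4 a1 a2 > 0`.
For the prescribed ratio `r1 / r2` the determinant `a1 a2 - b1 b2` cancels from the coexistence
state, which becomes a positive multiple of `(a2 (b1 + 3 b2), 2 a1 a2 + b1 b2 + b2²)`, and at that
direction `Q` factors as `a2 ((b1 + b2)² - 4 a1 a2) (a1 a2 + b1 b2 + 2 b2²) > 0`.
-/

def competitionForm (a1 a2 b1 b2 u v : ℝ) : ℝ :=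
  (b1 + b2) * u * v - a1 * u ^ 2 - a2 * v ^ 2

section

variable {r1 r2 a1 a2 b1 b2 : ℝ}

theorem alpha_add_beta_eq_competitionForm (u v : ℝ) :
    (b2 * u - a2 * v) * v + (b1 * v - a1 * u) * u = competitionForm a1 a2 b1 b2 u v := by
  unfold competitionForm
  ring

theorem competitionForm_smul (c u v : ℝ) :
    competitionForm a1 a2 b1 b2 (c * u) (c * v) = c ^ 2 * competitionForm a1 a2 b1 b2 u v := by
  unfold competitionForm
  ring

theorem competitionForm_coexistence_direction :
    competitionForm a1 a2 b1 b2 (a2 * (b1 + 3 * b2)) (2 * (a1 * a2) + b1 * b2 + b2 ^ 2)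
      = a2 * ((b1 + b2) ^ 2 - 4 * (a1 * a2)) * (a1 * a2 + b1 * b2 + 2 * b2 ^ 2) := by
  unfold competitionForm
  ring

theorem coexistence_u_eq (hD : a1 * a2 - b1 * b2 ≠ 0)
    (hM : 2 * a2 * (a1 * a2 + b1 * b2 + 2 * b2 ^ 2) ≠ 0)
    (hr : r1 * (2 * a2 * (a1 * a2 + b1 * b2 + 2 * b2 ^ 2))
      = (b1 + b2) * (3 * (a1 * a2) + b1 * b2) * r2) :
    (r1 * a2 - r2 * b1) / (a1 * a2 - b1 * b2)
      = r2 / (2 * a2 * (a1 * a2 + b1 * b2 + 2 * b2 ^ 2)) * (a2 * (b1 + 3 * b2)) := by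
  rw [div_mul_eq_mul_div, div_eq_div_iff hD hM]
  linear_combination a2 * hr

theorem coexistence_v_eq (hD : a1 * a2 - b1 * b2 ≠ 0)
    (hM : 2 * a2 * (a1 * a2 + b1 * b2 + 2 * b2 ^ 2) ≠ 0)
    (hr : r1 * (2 * a2 * (a1 * a2 + b1 * b2 + 2 * b2 ^ 2))
      = (b1 + b2) * (3 * (a1 * a2) + b1 * b2) * r2) :
    (r2 * a1 - r1 * b2) / (a1 * a2 - b1 * b2)
      = r2 / (2 * a2 * (a1 * a2 + b1 * b2 + 2 * b2 ^ 2)) * (2 * (a1 * a2) + b1 * b2 + b2 ^ 2) := by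
  rw [div_mul_eq_mul_div, div_eq_div_iff hD hM]
  linear_combination -b2 * hr

end

theorem alpha_plus_beta_pos_general
    (r1 r2 a1 a2 b1 b2 : ℝ)
    (hr2 : 0 < r2) (ha2 : 0 < a2)
    (hb1 : 0 < b1) (hb2 : 0 < b2)
    (h1 : b1 * b2 < a1 * a2) (h2 : 4 * (a1 * a2) < (b1 + b2) ^ 2)
    (hr : r1 / r2 = (b1 + b2) * (3 * (a1 * a2) + b1 * b2)
        / (2 * a2 * (a1 * a2 + b1 * b2 + 2 * b2 ^ 2))) :
    0 < (b2 * ((r1 * a2 - r2 * b1) / (a1 * a2 - b1 * b2))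
          - a2 * ((r2 * a1 - r1 * b2) / (a1 * a2 - b1 * b2)))
        * ((r2 * a1 - r1 * b2) / (a1 * a2 - b1 * b2))
      + (b1 * ((r2 * a1 - r1 * b2) / (a1 * a2 - b1 * b2))
          - a1 * ((r1 * a2 - r2 * b1) / (a1 * a2 - b1 * b2)))
        * ((r1 * a2 - r2 * b1) / (a1 * a2 - b1 * b2)) := by
  have hD : a1 * a2 - b1 * b2 ≠ 0 := (sub_pos.2 h1).ne'
  have hF : 0 < a1 * a2 + b1 * b2 + 2 * b2 ^ 2 := by
    linarith [mul_pos hb1 hb2, sq_nonneg b2]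
  have hM : 0 < 2 * a2 * (a1 * a2 + b1 * b2 + 2 * b2 ^ 2) := by positivity
  have hK := (div_eq_div_iff hr2.ne' hM.ne').1 hr
  have hdisc : 0 < (b1 + b2) ^ 2 - 4 * (a1 * a2) := sub_pos.2 h2
  rw [coexistence_u_eq hD hM.ne' hK, coexistence_v_eq hD hM.ne' hK,
    alpha_add_beta_eq_competitionForm, competitionForm_smul,
    competitionForm_coexistence_direction]
  positivity

theorem alpha_plus_beta_pos
    (r1 r2 a1 a2 b1 b2 : ℝ)
    (hr1 : 0 < r1) (hr2 : 0 < r2) (ha1 : 0 < a1) (ha2 : 0 < a2)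
    (hb1 : 0 < b1) (hb2 : 0 < b2)
    (h1 : b1 * b2 < a1 * a2) (h2 : 4 * (a1 * a2) < (b1 + b2) ^ 2)
    (hr : r1 / r2 = (b1 + b2) * (3 * (a1 * a2) + b1 * b2)
        / (2 * a2 * (a1 * a2 + b1 * b2 + 2 * b2 ^ 2))) :
    0 < (b2 * ((r1 * a2 - r2 * b1) / (a1 * a2 - b1 * b2))
          - a2 * ((r2 * a1 - r1 * b2) / (a1 * a2 - b1 * b2)))
        * ((r2 * a1 - r1 * b2) / (a1 * a2 - b1 * b2))
      + (b1 * ((r2 * a1 - r1 * b2) / (a1 * a2 - b1 * b2))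
          - a1 * ((r1 * a2 - r2 * b1) / (a1 * a2 - b1 * b2)))
        * ((r1 * a2 - r2 * b1) / (a1 * a2 - b1 * b2)) :=
  alpha_plus_beta_pos_general r1 r2 a1 a2 b1 b2 hr2 ha2 hb1 hb2 h1 h2 hr
end

section
/- With α = (b2*u* - a2*v*)*v* and β = (b1*v* - a1*u*)*u*, where u* = (r1*a2 - r2*b1)/(a-b), v* = (r2*a1 - r1*b2)/(a-b), a = a1*a2, b = b1*b2, a ≠ b, one has the identity α + β = (r2/(a-b))² * Q(r1/r2), where Q(r) = -a2*(a+b+2*b2²)*r² + (b1+b2)*(3*a+b)*r - a1*(a+b+2*b1²). -/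
/-!
Clearing the common denominator `a - b` of `u*` and `v*` turns `α + β` into `(a - b)⁻² F` for a
quadratic form `F` in `(r1, r2)`, and `F` is, identically in the coefficients, the homogenisation
`r2² Q(r1 / r2)` of `Q`.
-/

theorem cramer_numerators_form_eq {R : Type*} [CommRing R] (r1 r2 a1 a2 b1 b2 : R) :
    (b2 * (r1 * a2 - r2 * b1) - a2 * (r2 * a1 - r1 * b2)) * (r2 * a1 - r1 * b2)
        + (b1 * (r2 * a1 - r1 * b2) - a1 * (r1 * a2 - r2 * b1)) * (r1 * a2 - r2 * b1)
      = -a2 * (a1 * a2 + b1 * b2 + 2 * b2 ^ 2) * r1 ^ 2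
        + (b1 + b2) * (3 * (a1 * a2) + b1 * b2) * r1 * r2
        - a1 * (a1 * a2 + b1 * b2 + 2 * b1 ^ 2) * r2 ^ 2 := by
  ring

theorem sq_mul_quadratic_div {K : Type*} [Field K] (c2 c1 c0 p q : K) (hq : q ≠ 0) :
    q ^ 2 * (c2 * (p / q) ^ 2 + c1 * (p / q) - c0) = c2 * p ^ 2 + c1 * p * q - c0 * q ^ 2 := by
  field_simp

theorem alpha_plus_beta_eq_Q_general
    (r1 r2 a1 a2 b1 b2 : ℝ)
    (hr2 : r2 ≠ 0) :
    let a := a1 * a2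
    let b := b1 * b2
    let ustar := (r1 * a2 - r2 * b1) / (a - b)
    let vstar := (r2 * a1 - r1 * b2) / (a - b)
    let alpha := (b2 * ustar - a2 * vstar) * vstar
    let beta := (b1 * vstar - a1 * ustar) * ustar
    let Q : ℝ → ℝ := fun r =>
      -a2 * (a + b + 2 * b2 ^ 2) * r ^ 2 + (b1 + b2) * (3 * a + b) * r
        - a1 * (a + b + 2 * b1 ^ 2)
    alpha + beta = (r2 / (a - b)) ^ 2 * Q (r1 / r2) := by
  intro a b ustar vstar alpha beta Q
  have hQ : r2 ^ 2 * Q (r1 / r2) = -a2 * (a + b + 2 * b2 ^ 2) * r1 ^ 2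
      + (b1 + b2) * (3 * a + b) * r1 * r2 - a1 * (a + b + 2 * b1 ^ 2) * r2 ^ 2 :=
    sq_mul_quadratic_div _ _ _ r1 r2 hr2
  calc alpha + beta
      = (a - b)⁻¹ ^ 2 * ((b2 * (r1 * a2 - r2 * b1) - a2 * (r2 * a1 - r1 * b2)) * (r2 * a1 - r1 * b2)
          + (b1 * (r2 * a1 - r1 * b2) - a1 * (r1 * a2 - r2 * b1)) * (r1 * a2 - r2 * b1)) := by
        simp only [alpha, beta, ustar, vstar]
        ring
    _ = (a - b)⁻¹ ^ 2 * (r2 ^ 2 * Q (r1 / r2)) := by rw [cramer_numerators_form_eq, hQ]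
    _ = (r2 / (a - b)) ^ 2 * Q (r1 / r2) := by ring

theorem alpha_plus_beta_eq_Q
    (r1 r2 a1 a2 b1 b2 : ℝ)
    (hr2 : r2 ≠ 0) (hab : a1 * a2 ≠ b1 * b2) :
    let a := a1 * a2
    let b := b1 * b2
    let ustar := (r1 * a2 - r2 * b1) / (a - b)
    let vstar := (r2 * a1 - r1 * b2) / (a - b)
    let alpha := (b2 * ustar - a2 * vstar) * vstar
    let beta := (b1 * vstar - a1 * ustar) * ustar
    let Q : ℝ → ℝ := fun r =>
      -a2 * (a + b + 2 * b2 ^ 2) * r ^ 2 + (b1 + b2) * (3 * a + b) * r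
        - a1 * (a + b + 2 * b1 ^ 2)
    alpha + beta = (r2 / (a - b)) ^ 2 * Q (r1 / r2) :=
  alpha_plus_beta_eq_Q_general r1 r2 a1 a2 b1 b2 hr2
end

section
/- Fix A = λ² > 0, B > 0 and let C depend affinely on d21 via C(d21) = -d12*α*λ - d21*β*λ + det J* with β > 0 and u* > 0, B(d21) = d12*v**λ² + d21*u**λ² - tr J**λ. Then the positive root d_bif(d21) = (-B(d21) + sqrt(B(d21)² - 4*A*C(d21)))/(2*A) of the quadratic tends to β/(u**λ) as d21 → +∞. -/
/-!
Rationalising the numerator, the root is `-2C / (B + √(B² - 4AC))`. Writing `B = (b₀ t + b₁) / t` and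
`C = (c₀ t - c₁) / t` with `t = 1 / d₂₁`, `b₁ = u*λ²`, `c₁ = βλ`, the root becomes
`-2 (c₀ t - c₁) / (b₀ t + b₁ + √((b₀ t + b₁)² - 4A (c₀ t - c₁) t))`, which is continuous at `t = 0`
with value `c₁ / b₁ = β / (u*λ)`.
-/

open Filter Topology

noncomputable def quadraticRoot (a b c : ℝ) : ℝ :=
  (-b + √(discrim a b c)) / (2 * a)

theorem quadraticRoot_eq_neg_two_mul_div {a b c : ℝ} (ha : a ≠ 0) (hb : 0 < b)
    (hD : 0 ≤ discrim a b c) :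
    quadraticRoot a b c = -2 * c / (b + √(discrim a b c)) := by
  have hsq := Real.sq_sqrt hD
  rw [quadraticRoot, div_eq_div_iff (mul_ne_zero two_ne_zero ha) (by positivity)]
  unfold discrim at hsq ⊢
  linear_combination hsq

theorem quadraticRoot_mul_mul {s : ℝ} (hs : 0 < s) (a b c : ℝ) :
    quadraticRoot a (s * b) (s * c) = s * quadraticRoot a b (c / s) := by
  have hD : discrim a (s * b) (s * c) = s ^ 2 * discrim a b (c / s) := by
    unfold discrim
    field_simp
  rw [quadraticRoot, quadraticRoot, hD, Real.sqrt_mul (sq_nonneg s), Real.sqrt_sq hs.le]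
  ring

theorem tendsto_quadraticRoot_atTop {a b₀ b₁ c₀ c₁ : ℝ} (ha : a ≠ 0) (hb₁ : 0 < b₁) :
    Tendsto (fun d => quadraticRoot a (b₀ + b₁ * d) (c₀ - c₁ * d)) atTop (𝓝 (c₁ / b₁)) := by
  set x : ℝ → ℝ := fun t => b₀ * t + b₁
  set y : ℝ → ℝ := fun t => c₀ * t - c₁
  set E : ℝ → ℝ := fun t => discrim a (x t) (y t * t)
  have hx : Tendsto x (𝓝 0) (𝓝 b₁) :=
    (show Continuous x by fun_prop).tendsto' 0 b₁ (by simp [x])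
  have hy : Tendsto y (𝓝 0) (𝓝 (-c₁)) :=
    (show Continuous y by fun_prop).tendsto' 0 (-c₁) (by simp [y])
  have hE : Tendsto E (𝓝 0) (𝓝 (b₁ ^ 2)) :=
    (show Continuous E by unfold E discrim; fun_prop).tendsto' 0 _ (by simp [E, x, discrim])
  have hG : Tendsto (fun t => -2 * y t / (x t + √(E t))) (𝓝 0) (𝓝 (c₁ / b₁)) := by
    have hlim : Tendsto (fun t => -2 * y t / (x t + √(E t))) (𝓝 0)
        (𝓝 (-2 * -c₁ / (b₁ + √(b₁ ^ 2)))) :=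
      (hy.const_mul (-2)).div (hx.add hE.sqrt) (by rw [Real.sqrt_sq hb₁.le]; positivity)
    rwa [Real.sqrt_sq hb₁.le, show -2 * -c₁ / (b₁ + b₁) = c₁ / b₁ by field_simp; ring] at hlim
  have hinv : Tendsto (fun d : ℝ => d⁻¹) atTop (𝓝 0) := tendsto_inv_atTop_zero
  refine (hG.comp hinv).congr' ?_
  filter_upwards [eventually_gt_atTop 0, (hx.comp hinv).eventually_const_lt hb₁,
    (hE.comp hinv).eventually_const_lt (by positivity)]
    with d hd (hxd : 0 < x d⁻¹) (hEd : 0 < E d⁻¹)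
  have hB : b₀ + b₁ * d = d * x d⁻¹ := by simp only [x]; field_simp
  have hC : c₀ - c₁ * d = d * y d⁻¹ := by simp only [y]; field_simp
  rw [Function.comp_apply, hB, hC, quadraticRoot_mul_mul hd, div_eq_mul_inv (y d⁻¹),
    quadraticRoot_eq_neg_two_mul_div ha hxd hEd.le]
  change _ = d * (-2 * (y d⁻¹ * d⁻¹) / (x d⁻¹ + √(E d⁻¹)))
  field_simp

theorem bifurcation_point_limit_general
    (lam ustar vstar d12 alpha beta detJ trJ : ℝ)
    (hlam : 0 < lam) (hu : 0 < ustar) :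
    Tendsto (fun d21 : ℝ =>
        (-(d12 * vstar * lam ^ 2 + d21 * ustar * lam ^ 2 - trJ * lam)
          + Real.sqrt ((d12 * vstar * lam ^ 2 + d21 * ustar * lam ^ 2 - trJ * lam) ^ 2
              - 4 * lam ^ 2 * (-d12 * alpha * lam - d21 * beta * lam + detJ)))
          / (2 * lam ^ 2))
      atTop (𝓝 (beta / (ustar * lam))) := by
  have key := tendsto_quadraticRoot_atTop (a := lam ^ 2) (b₀ := d12 * vstar * lam ^ 2 - trJ * lam)
    (c₀ := detJ - d12 * alpha * lam) (c₁ := beta * lam) (by positivity)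
    (by positivity : 0 < ustar * lam ^ 2)
  have hlim : beta * lam / (ustar * lam ^ 2) = beta / (ustar * lam) := by
    field_simp
  rw [hlim] at key
  refine key.congr fun d => ?_
  unfold quadraticRoot discrim
  ring_nf

theorem bifurcation_point_limit
    (lam ustar vstar d12 alpha beta detJ trJ : ℝ)
    (hlam : 0 < lam) (hu : 0 < ustar) (hv : 0 < vstar)
    (hd12 : 0 ≤ d12) (hbeta : 0 < beta) (htr : trJ < 0) :
    Tendsto (fun d21 : ℝ =>
        (-(d12 * vstar * lam ^ 2 + d21 * ustar * lam ^ 2 - trJ * lam)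
          + Real.sqrt ((d12 * vstar * lam ^ 2 + d21 * ustar * lam ^ 2 - trJ * lam) ^ 2
              - 4 * lam ^ 2 * (-d12 * alpha * lam - d21 * beta * lam + detJ)))
          / (2 * lam ^ 2))
      atTop (𝓝 (beta / (ustar * lam))) :=
  bifurcation_point_limit_general lam ustar vstar d12 alpha beta detJ trJ hlam hu
end
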